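/- Suppose X₂ − X₁ − Y₁ − Y₂ forms a Markov chain of finite-valued random variables. Then for every v ∈ 𝓘_{X₁,Y₁} there exists w ∈ 𝓘_{X₂,Y₂} such that w_X ≤ v_X, w_Y ≤ v_Y, w_{XY} ≤ v_{XY}, and I(X₂;Y₂) − w_X − w_Y + w_{XY} ≤ I(X₁;Y₁) − v_X − v_Y + v_{XY}. -/

import Mathlib

open scoped BigOperators Pointwise Classical

noncomputable section

namespace GW

/-- A probability mass function on a finite type. -/
def IsPMF {α : Type} [Fintype α] (p : α → ℝ) : Prop :=
  (∀ a, 0 ≤ p a) ∧ ∑ a, p a = 1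

/-- Distribution (pmf) of the random variable `f` under the pmf `p`. -/
def dist {α β : Type} [Fintype α] (p : α → ℝ) (f : α → β) : β → ℝ :=
  fun b => ∑ a, if f a = b then p a else 0

/-- Shannon entropy (base 2) of the random variable `f` under the pmf `p`. -/
def H {α β : Type} [Fintype α] [Fintype β] (p : α → ℝ) (f : α → β) : ℝ :=
  ∑ b, -(dist p f b * Real.logb 2 (dist p f b))

/-- Mutual information `I(f; g)` under `p`. -/
def I2 {α β γ : Type} [Fintype α] [Fintype β] [Fintype γ]
    (p : α → ℝ) (f : α → β) (g : α → γ) : ℝ :=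
  H p f + H p g - H p (fun a => (f a, g a))

/-- Conditional entropy `H(f | g)` under `p`. -/
def Hc {α β γ : Type} [Fintype α] [Fintype β] [Fintype γ]
    (p : α → ℝ) (f : α → β) (g : α → γ) : ℝ :=
  H p (fun a => (f a, g a)) - H p g

/-- Conditional mutual information `I(f; g | h)` under `p`. -/
def Ic {α β γ δ : Type} [Fintype α] [Fintype β] [Fintype γ] [Fintype δ]
    (p : α → ℝ) (f : α → β) (g : α → γ) (h : α → δ) : ℝ :=
  Hc p f h + Hc p g h - Hc p (fun a => (f a, g a)) h

/-- Independence of the random variables `f` and `g` under `p`. -/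
def Indep {α β γ : Type} [Fintype α] (p : α → ℝ) (f : α → β) (g : α → γ) : Prop :=
  ∀ b c, dist p (fun a => (f a, g a)) (b, c) = dist p f b * dist p g c

/-- `q` is a joint pmf on `X × Y × U` whose `(X,Y)`-marginal is `p`; i.e. `U` is an
auxiliary random variable defined jointly with `(X,Y)` via a conditional pmf `p_{U|XY}`. -/
def IsAux {X Y U : Type} [Fintype X] [Fintype Y] [Fintype U]
    (p : X × Y → ℝ) (q : X × Y × U → ℝ) : Prop :=
  IsPMF q ∧ ∀ x y, (∑ u, q (x, y, u)) = p (x, y)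

/-- Coordinate map onto `X`. -/
def cX {X Y U : Type} : X × Y × U → X := fun a => a.1
/-- Coordinate map onto `Y`. -/
def cY {X Y U : Type} : X × Y × U → Y := fun a => a.2.1
/-- Coordinate map onto `U`. -/
def cU {X Y U : Type} : X × Y × U → U := fun a => a.2.2
/-- Coordinate map onto `X × Y`. -/
def cXY {X Y U : Type} : X × Y × U → X × Y := fun a => (a.1, a.2.1)

/-- The mutual information region `𝓘_{XY}`. -/
def MIRegion {X Y : Type} [Fintype X] [Fintype Y] (p : X × Y → ℝ) : Set (ℝ × ℝ × ℝ) :=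
  { v | ∃ (U : Type) (_ : Fintype U) (q : X × Y × U → ℝ), IsAux p q ∧
      v = (I2 q cX cU, I2 q cY cU, I2 q cXY cU) }

/-- The outer region `𝓘ᵒ_{XY}`. -/
def OuterRegion {X Y : Type} [Fintype X] [Fintype Y] (p : X × Y → ℝ) : Set (ℝ × ℝ × ℝ) :=
  { v | 0 ≤ v.1 ∧ 0 ≤ v.2.1 ∧ v.1 + v.2.1 - v.2.2 ≤ I2 p Prod.fst Prod.snd ∧
        0 ≤ v.2.2 - v.2.1 ∧ v.2.2 - v.2.1 ≤ Hc p Prod.fst Prod.snd ∧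
        0 ≤ v.2.2 - v.1 ∧ v.2.2 - v.1 ≤ Hc p Prod.snd Prod.fst }

/-- Maximal interaction information `G_NNI(X; Y)`. -/
def GNNI {X Y : Type} [Fintype X] [Fintype Y] (p : X × Y → ℝ) : ℝ :=
  sSup { r | ∃ (U : Type) (_ : Fintype U) (q : X × Y × U → ℝ), IsAux p q ∧
      r = Ic q cX cY cU - I2 p Prod.fst Prod.snd }

/-- Asymmetric private interaction information `G_PNI(X → Y)`. -/
def GPNI {X Y : Type} [Fintype X] [Fintype Y] (p : X × Y → ℝ) : ℝ :=
  sSup { r | ∃ (U : Type) (_ : Fintype U) (q : X × Y × U → ℝ), IsAux p q ∧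
      Indep q cU cX ∧ r = Ic q cX cY cU - I2 p Prod.fst Prod.snd }

/-- Symmetric private interaction information `G_PPI(X; Y)`. -/
def GPPI {X Y : Type} [Fintype X] [Fintype Y] (p : X × Y → ℝ) : ℝ :=
  sSup { r | ∃ (U : Type) (_ : Fintype U) (q : X × Y × U → ℝ), IsAux p q ∧
      Indep q cU cX ∧ Indep q cU cY ∧ r = Ic q cX cY cU - I2 p Prod.fst Prod.snd }

/-! Attach the auxiliary `U` of `(X₁, Y₁)` to the whole source through the conditional pmf
`p(u | x₁, y₁)`, so that `U − (X₁, Y₁) − (X₂, Y₂)`, and take for `w` the point realised by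
`(X₂, Y₂, U)`. The first three inequalities are data processing along `X₂ − X₁ − U`,
`Y₂ − Y₁ − U` and `(X₂, Y₂) − (X₁, Y₁) − U`. Since
`I(X;Y) − I(X;U) − I(Y;U) + I(X,Y;U) = I(X;Y|U)`, the last one is
`I(X₂;Y₂|U) ≤ I(X₁;Y₂|U) ≤ I(X₁;Y₁|U)`, data processing along the chain conditioned on `U`.
All these Markov chains follow from the hypotheses and the construction by the chain rule and the
nonnegativity of conditional mutual information (Gibbs' inequality). -/

section Distribution

variable {α β γ δ : Type} [Fintype α]

lemma dist_nonneg {p : α → ℝ} (hp : ∀ a, 0 ≤ p a) (f : α → β) (b : β) : 0 ≤ dist p f b :=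
  Finset.sum_nonneg fun a _ => by split <;> simp [hp a]

lemma le_dist {p : α → ℝ} (hp : ∀ a, 0 ≤ p a) (f : α → β) (a : α) : p a ≤ dist p f (f a) := by
  have := Finset.single_le_sum (f := fun a' => if f a' = f a then p a' else 0)
    (fun a' _ => by split <;> simp [hp a']) (Finset.mem_univ a)
  simpa [dist] using this

lemma dist_le_dist_comp {p : α → ℝ} (hp : ∀ a, 0 ≤ p a) (f : α → β) (φ : β → γ) (b : β) :
    dist p f b ≤ dist p (fun a => φ (f a)) (φ b) :=
  Finset.sum_le_sum fun a _ => by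
    by_cases h : f a = b
    · simp [h]
    · simpa [h] using ite_nonneg (hp a) le_rfl

lemma sum_dist [Fintype β] (p : α → ℝ) (f : α → β) : ∑ b, dist p f b = ∑ a, p a := by
  unfold dist
  rw [Finset.sum_comm]
  simp

lemma sum_dist_mul [Fintype β] (p : α → ℝ) (f : α → β) (T : β → ℝ) :
    ∑ b, dist p f b * T b = ∑ a, p a * T (f a) := by
  simp only [dist, Finset.sum_mul, ite_mul, zero_mul]
  rw [Finset.sum_comm]
  simp

lemma isPMF_dist {p : α → ℝ} (hp : IsPMF p) [Fintype β] (f : α → β) : IsPMF (dist p f) :=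
  ⟨dist_nonneg hp.1 f, by rw [sum_dist, hp.2]⟩

lemma dist_comp [Fintype β] (p : α → ℝ) (f : α → β) (φ : β → γ) :
    dist p (fun a => φ (f a)) = dist (dist p f) φ := by
  funext c
  calc dist p (fun a => φ (f a)) c = ∑ a, p a * if φ (f a) = c then 1 else 0 := by simp [dist]
    _ = ∑ b, dist p f b * if φ b = c then 1 else 0 :=
      (sum_dist_mul p f fun b => if φ b = c then 1 else 0).symm
    _ = dist (dist p f) φ c := by simp [dist]

lemma dist_comp_injective {φ : β → γ} (hφ : φ.Injective) (p : α → ℝ) (f : α → β) (b : β) :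
    dist p (fun a => φ (f a)) (φ b) = dist p f b := by
  simp [dist, hφ.eq_iff]

lemma sum_dist_pair [Fintype β] (p : α → ℝ) (f : α → β) (h : α → δ) (d : δ) :
    ∑ b, dist p (fun a => (f a, h a)) (b, d) = dist p h d := by
  unfold dist
  rw [Finset.sum_comm]
  refine Finset.sum_congr rfl fun a _ => ?_
  by_cases hd : h a = d <;> simp [hd, Prod.ext_iff]

lemma dist_pos_of_dist_pair_pos {p : α → ℝ} (hp : ∀ a, 0 ≤ p a) (f : α → β) (g : α → γ)
    (h : α → δ) {v : (β × γ) × δ} (hv : 0 < dist p (fun a => ((f a, g a), h a)) v) :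
    0 < dist p (fun a => (f a, h a)) (v.1.1, v.2) ∧ 0 < dist p (fun a => (g a, h a)) (v.1.2, v.2) ∧
      0 < dist p h v.2 :=
  ⟨hv.trans_le (dist_le_dist_comp hp _ (fun v => (v.1.1, v.2)) v),
    hv.trans_le (dist_le_dist_comp hp _ (fun v => (v.1.2, v.2)) v),
    hv.trans_le (dist_le_dist_comp hp _ Prod.snd v)⟩

lemma sum_dist_triple [Fintype δ] (p : α → ℝ) (f : α → β) (g : α → γ) (k : α → δ) (b : β) (c : γ) :
    ∑ d, dist p (fun a => (f a, g a, k a)) (b, c, d) = dist p (fun a => (f a, g a)) (b, c) := by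
  unfold dist
  rw [Finset.sum_comm]
  refine Finset.sum_congr rfl fun a _ => ?_
  by_cases hb : f a = b <;> by_cases hc : g a = c <;> simp [hb, hc, Prod.ext_iff]

end Distribution

section Entropy

variable {α β γ : Type} [Fintype α] [Fintype β]

lemma H_eq_sum (p : α → ℝ) (f : α → β) : H p f = ∑ a, -(p a * Real.logb 2 (dist p f (f a))) := by
  simp only [H, neg_mul_eq_mul_neg, sum_dist_mul p f fun b => -Real.logb 2 (dist p f b)]

lemma H_comp_of_injective [Fintype γ] {φ : β → γ} (hφ : φ.Injective) (p : α → ℝ) (f : α → β) :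
    H p (fun a => φ (f a)) = H p f := by
  simp only [H_eq_sum, dist_comp_injective hφ]

lemma H_comp [Fintype γ] (p : α → ℝ) (f : α → β) (φ : β → γ) :
    H p (fun a => φ (f a)) = H (dist p f) φ := by
  simp only [H, dist_comp]

end Entropy

lemma sum_mul_logb_div_nonneg {ι : Type} [Fintype ι] {D R : ι → ℝ} (hD : ∀ i, 0 ≤ D i)
    (hR : ∀ i, 0 ≤ R i) (hDR : ∀ i, 0 < D i → 0 < R i) (hsum : ∑ i, R i ≤ ∑ i, D i) :
    0 ≤ ∑ i, D i * Real.logb 2 (D i / R i) := by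
  have hlog2 : 0 < Real.log 2 := Real.log_pos one_lt_two
  have key : ∀ i, (D i - R i) / Real.log 2 ≤ D i * Real.logb 2 (D i / R i) := by
    intro i
    rcases (hD i).eq_or_lt with h0 | hpos
    · simpa [← h0] using div_nonpos_of_nonpos_of_nonneg (neg_nonpos.2 (hR i)) hlog2.le
    · have hRi := hDR i hpos
      have hlog := Real.one_sub_inv_le_log_of_pos (div_pos hpos hRi)
      rw [Real.logb, ← mul_div_assoc]
      refine div_le_div_of_nonneg_right ?_ hlog2.le
      calc D i - R i = D i * (1 - (D i / R i)⁻¹) := by field_simp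
        _ ≤ D i * Real.log (D i / R i) := mul_le_mul_of_nonneg_left hlog hpos.le
  calc 0 ≤ (∑ i, D i - ∑ i, R i) / Real.log 2 := div_nonneg (sub_nonneg.2 hsum) hlog2.le
    _ = ∑ i, (D i - R i) / Real.log 2 := by rw [← Finset.sum_sub_distrib, Finset.sum_div]
    _ ≤ _ := Finset.sum_le_sum fun i _ => key i

section ConditionalMutualInformation

variable {α β γ δ : Type} [Fintype α] [Fintype β] [Fintype γ] [Fintype δ]

/-- The law of `((f, g), h)` with the same `(f, h)`- and `(g, h)`-marginals under which `f` and
`g` are conditionally independent given `h`. -/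
def condProd (p : α → ℝ) (f : α → β) (g : α → γ) (h : α → δ) : (β × γ) × δ → ℝ := fun v =>
  dist p (fun a => (f a, h a)) (v.1.1, v.2) * dist p (fun a => (g a, h a)) (v.1.2, v.2) /
    dist p h v.2

lemma sum_condProd (p : α → ℝ) (f : α → β) (g : α → γ) (h : α → δ) :
    ∑ v, condProd p f g h v = ∑ a, p a := by
  rw [← sum_dist p h, Fintype.sum_prod_type, Finset.sum_comm]
  refine Finset.sum_congr rfl fun d _ => ?_
  calc ∑ bc : β × γ, condProd p f g h (bc, d)
      = (∑ b, dist p (fun a => (f a, h a)) (b, d)) * (∑ c, dist p (fun a => (g a, h a)) (c, d)) /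
          dist p h d := by
        rw [Finset.sum_mul_sum, Finset.sum_div, Fintype.sum_prod_type]
        simp only [condProd, Finset.sum_div]
    _ = dist p h d := by rw [sum_dist_pair, sum_dist_pair, mul_self_div_self]

lemma Ic_eq_H (p : α → ℝ) (f : α → β) (g : α → γ) (h : α → δ) :
    Ic p f g h = H p (fun a => (f a, h a)) + H p (fun a => (g a, h a))
      - H p (fun a => ((f a, g a), h a)) - H p h := by
  unfold Ic Hc
  ring

lemma Ic_eq_sum_mul_logb {p : α → ℝ} (hp : ∀ a, 0 ≤ p a) (f : α → β) (g : α → γ) (h : α → δ) :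
    Ic p f g h = ∑ v, dist p (fun a => ((f a, g a), h a)) v *
      Real.logb 2 (dist p (fun a => ((f a, g a), h a)) v / condProd p f g h v) := by
  set w := fun a => ((f a, g a), h a)
  set T : (β × γ) × δ → ℝ := fun v => Real.logb 2 (dist p w v) + Real.logb 2 (dist p h v.2)
    - Real.logb 2 (dist p (fun a => (f a, h a)) (v.1.1, v.2))
    - Real.logb 2 (dist p (fun a => (g a, h a)) (v.1.2, v.2))
  have hT : Ic p f g h = ∑ a, p a * T (w a) := by
    simp only [Ic_eq_H, H_eq_sum, ← Finset.sum_add_distrib, ← Finset.sum_sub_distrib, T]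
    exact Finset.sum_congr rfl fun a _ => by ring
  rw [hT, ← sum_dist_mul p w T]
  refine Finset.sum_congr rfl fun v _ => ?_
  rcases (dist_nonneg hp w v).eq_or_lt with h0 | hpos
  · simp [← h0]
  · obtain ⟨hF, hG, hN⟩ := dist_pos_of_dist_pair_pos hp f g h hpos
    rw [condProd, Real.logb_div hpos.ne' (by positivity), Real.logb_div (by positivity) hN.ne',
      Real.logb_mul hF.ne' hG.ne']
    ring

theorem Ic_nonneg {p : α → ℝ} (hp : ∀ a, 0 ≤ p a) (f : α → β) (g : α → γ) (h : α → δ) :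
    0 ≤ Ic p f g h := by
  rw [Ic_eq_sum_mul_logb hp]
  refine sum_mul_logb_div_nonneg (dist_nonneg hp _) (fun v => ?_) (fun v hv => ?_) ?_
  · have := dist_nonneg hp (fun a => (f a, h a)) (v.1.1, v.2)
    have := dist_nonneg hp (fun a => (g a, h a)) (v.1.2, v.2)
    have := dist_nonneg hp h v.2
    unfold condProd
    positivity
  · obtain ⟨hF, hG, hN⟩ := dist_pos_of_dist_pair_pos hp f g h hv
    unfold condProd
    positivity
  · rw [sum_condProd, sum_dist]

lemma Ic_eq_zero_of_factor {p : α → ℝ} (hp : ∀ a, 0 ≤ p a) {f : α → β} {g : α → γ} {h : α → δ}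
    (hfac : ∀ v, dist p (fun a => ((f a, g a), h a)) v * dist p h v.2
      = dist p (fun a => (f a, h a)) (v.1.1, v.2) * dist p (fun a => (g a, h a)) (v.1.2, v.2)) :
    Ic p f g h = 0 := by
  rw [Ic_eq_sum_mul_logb hp]
  refine Finset.sum_eq_zero fun v _ => ?_
  rcases (dist_nonneg hp (fun a => ((f a, g a), h a)) v).eq_or_lt with h0 | hpos
  · simp [← h0]
  · obtain ⟨hF, hG, hN⟩ := dist_pos_of_dist_pair_pos hp f g h hpos
    rw [condProd, div_div_eq_mul_div, hfac, div_self (by positivity), Real.logb_one, mul_zero]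

end ConditionalMutualInformation

section InformationCalculus

variable {α β γ δ ε : Type} [Fintype α] [Fintype β] [Fintype γ] [Fintype δ] [Fintype ε]

lemma Ic_comm (p : α → ℝ) (f : α → β) (g : α → γ) (h : α → δ) : Ic p f g h = Ic p g f h := by
  have e : H p (fun a => ((g a, f a), h a)) = H p (fun a => ((f a, g a), h a)) :=
    H_comp_of_injective (Prod.swap_injective.prodMap Function.injective_id) p
      (fun a => ((f a, g a), h a))
  rw [Ic_eq_H, Ic_eq_H, e]
  ring

lemma Ic_comp_right_of_injective {φ : γ → ε} (hφ : φ.Injective) (p : α → ℝ) (f : α → β)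
    (g : α → γ) (h : α → δ) : Ic p f (fun a => φ (g a)) h = Ic p f g h := by
  have e₁ : H p (fun a => (φ (g a), h a)) = H p (fun a => (g a, h a)) :=
    H_comp_of_injective (hφ.prodMap Function.injective_id) p (fun a => (g a, h a))
  have e₂ : H p (fun a => ((f a, φ (g a)), h a)) = H p (fun a => ((f a, g a), h a)) :=
    H_comp_of_injective ((Function.injective_id.prodMap hφ).prodMap Function.injective_id) p
      (fun a => ((f a, g a), h a))
  rw [Ic_eq_H, Ic_eq_H, e₁, e₂]

lemma Ic_comp_cond_of_injective {φ : δ → ε} (hφ : φ.Injective) (p : α → ℝ) (f : α → β)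
    (g : α → γ) (h : α → δ) : Ic p f g (fun a => φ (h a)) = Ic p f g h := by
  have e₁ : H p (fun a => (f a, φ (h a))) = H p (fun a => (f a, h a)) :=
    H_comp_of_injective (Function.injective_id.prodMap hφ) p (fun a => (f a, h a))
  have e₂ : H p (fun a => (g a, φ (h a))) = H p (fun a => (g a, h a)) :=
    H_comp_of_injective (Function.injective_id.prodMap hφ) p (fun a => (g a, h a))
  have e₃ : H p (fun a => ((f a, g a), φ (h a))) = H p (fun a => ((f a, g a), h a)) :=
    H_comp_of_injective (Function.injective_id.prodMap hφ) p (fun a => ((f a, g a), h a))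
  rw [Ic_eq_H, Ic_eq_H, e₁, e₂, e₃, H_comp_of_injective hφ]

lemma Ic_pair_right (p : α → ℝ) (f : α → β) (g : α → γ) (k : α → ε) (h : α → δ) :
    Ic p f (fun a => (g a, k a)) h = Ic p f g h + Ic p f k (fun a => (h a, g a)) := by
  have e₁ : H p (fun a => (f a, (h a, g a))) = H p (fun a => ((f a, g a), h a)) :=
    H_comp_of_injective (φ := fun v : (β × γ) × δ => (v.1.1, (v.2, v.1.2)))
      (fun v w hvw => by simp_all [Prod.ext_iff]) p (fun a => ((f a, g a), h a))
  have e₂ : H p (fun a => (k a, (h a, g a))) = H p (fun a => ((g a, k a), h a)) :=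
    H_comp_of_injective (φ := fun v : (γ × ε) × δ => (v.1.2, (v.2, v.1.1)))
      (fun v w hvw => by simp_all [Prod.ext_iff]) p (fun a => ((g a, k a), h a))
  have e₃ : H p (fun a => ((f a, k a), (h a, g a))) = H p (fun a => ((f a, (g a, k a)), h a)) :=
    H_comp_of_injective (φ := fun v : (β × (γ × ε)) × δ => ((v.1.1, v.1.2.2), (v.2, v.1.2.1)))
      (fun v w hvw => by simp_all [Prod.ext_iff]) p (fun a => ((f a, (g a, k a)), h a))
  have e₄ : H p (fun a => (h a, g a)) = H p (fun a => (g a, h a)) :=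
    H_comp_of_injective Prod.swap_injective p (fun a => (g a, h a))
  rw [Ic_eq_H, Ic_eq_H, Ic_eq_H, e₁, e₂, e₃, e₄]
  ring

lemma Ic_pair_right_comm (p : α → ℝ) (f : α → β) (g : α → γ) (k : α → ε) (h : α → δ) :
    Ic p f (fun a => (g a, k a)) h = Ic p f (fun a => (k a, g a)) h :=
  Ic_comp_right_of_injective Prod.swap_injective p f (fun a => (k a, g a)) h

lemma I2_comp_left_of_injective {φ : β → ε} (hφ : φ.Injective) (p : α → ℝ) (f : α → β)
    (g : α → γ) : I2 p (fun a => φ (f a)) g = I2 p f g := by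
  have e : H p (fun a => (φ (f a), g a)) = H p (fun a => (f a, g a)) :=
    H_comp_of_injective (hφ.prodMap Function.injective_id) p (fun a => (f a, g a))
  rw [I2, I2, e, H_comp_of_injective hφ]

lemma I2_pair_left (p : α → ℝ) (f : α → β) (g : α → γ) (u : α → δ) :
    I2 p (fun a => (f a, g a)) u = I2 p f u + Ic p g u f := by
  have e₁ : H p (fun a => (g a, f a)) = H p (fun a => (f a, g a)) :=
    H_comp_of_injective Prod.swap_injective p (fun a => (f a, g a))
  have e₂ : H p (fun a => (u a, f a)) = H p (fun a => (f a, u a)) :=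
    H_comp_of_injective Prod.swap_injective p (fun a => (f a, u a))
  have e₃ : H p (fun a => ((g a, u a), f a)) = H p (fun a => ((f a, g a), u a)) :=
    H_comp_of_injective (φ := fun v : (β × γ) × δ => ((v.1.2, v.2), v.1.1))
      (fun v w hvw => by simp_all [Prod.ext_iff]) p (fun a => ((f a, g a), u a))
  rw [I2, I2, Ic_eq_H, e₁, e₂, e₃]
  ring

lemma Ic_eq_I2 (p : α → ℝ) (f : α → β) (g : α → γ) (u : α → δ) :
    Ic p f g u = I2 p f g - I2 p f u - I2 p g u + I2 p (fun a => (f a, g a)) u := by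
  rw [Ic_eq_H, I2, I2, I2, I2]
  ring

lemma I2_comp (p : α → ℝ) (G : α → β) (f : β → γ) (g : β → δ) :
    I2 p (fun a => f (G a)) (fun a => g (G a)) = I2 (dist p G) f g := by
  rw [I2, I2, H_comp p G f, H_comp p G g, ← H_comp p G (fun b => (f b, g b))]

lemma Ic_comp (p : α → ℝ) (G : α → β) (f : β → γ) (g : β → δ) (h : β → ε) :
    Ic p (fun a => f (G a)) (fun a => g (G a)) (fun a => h (G a)) = Ic (dist p G) f g h := by
  rw [Ic_eq_H, Ic_eq_H, H_comp p G h, ← H_comp p G (fun b => (f b, h b)),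
    ← H_comp p G (fun b => (g b, h b)), ← H_comp p G (fun b => ((f b, g b), h b))]

end InformationCalculus

section MarkovChains

variable {α β γ δ ε : Type} [Fintype α] [Fintype β] [Fintype γ] [Fintype δ] [Fintype ε]
  {p : α → ℝ}

lemma Ic_eq_zero_of_pair_right (hp : ∀ a, 0 ≤ p a) {f : α → β} {g : α → γ} {k : α → ε}
    {h : α → δ} (h₀ : Ic p f (fun a => (g a, k a)) h = 0) : Ic p f k h = 0 := by
  have := Ic_pair_right p f k g h
  rw [← Ic_pair_right_comm, h₀] at this
  linarith [Ic_nonneg hp f k h, Ic_nonneg hp f g (fun a => (h a, k a))]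

lemma Ic_eq_zero_of_contraction (hp : ∀ a, 0 ≤ p a) {f : α → β} {b : α → γ} {c : α → δ}
    {u : α → ε} (h₁ : Ic p f c b = 0) (h₂ : Ic p f u (fun a => (b a, c a)) = 0) :
    Ic p f u b = 0 ∧ Ic p f c (fun a => (b a, u a)) = 0 := by
  have hcu := Ic_pair_right p f c u b
  have huc := Ic_pair_right p f u c b
  rw [h₁, h₂, Ic_pair_right_comm] at hcu
  have := Ic_nonneg hp f u b
  have := Ic_nonneg hp f c (fun a => (b a, u a))
  constructor <;> linarith

theorem I2_le_of_Ic_eq_zero (hp : ∀ a, 0 ≤ p a) {f : α → β} {g : α → γ} {k : α → δ}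
    (h₀ : Ic p f g k = 0) : I2 p f g ≤ I2 p k g := by
  have hfk := I2_pair_left p f k g
  have hkf := I2_pair_left p k f g
  have hswap : I2 p (fun a => (f a, k a)) g = I2 p (fun a => (k a, f a)) g :=
    I2_comp_left_of_injective Prod.swap_injective p (fun a => (k a, f a)) g
  linarith [Ic_nonneg hp k g f]

theorem Ic_le_of_Ic_eq_zero (hp : ∀ a, 0 ≤ p a) {f : α → β} {g : α → γ} {k : α → ε}
    {h : α → δ} (h₀ : Ic p f g (fun a => (k a, h a)) = 0) : Ic p f g h ≤ Ic p f k h := by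
  have hgk := Ic_pair_right p f g k h
  have hkg := Ic_pair_right p f k g h
  have hcond : Ic p f g (fun a => (h a, k a)) = 0 :=
    (Ic_comp_cond_of_injective Prod.swap_injective p f g (fun a => (k a, h a))).trans h₀
  rw [Ic_pair_right_comm, hcond] at hkg
  linarith [Ic_nonneg hp f k (fun a => (h a, g a))]

end MarkovChains

theorem data_processing_of_markov {Ω X₂ X₁ Y₁ Y₂ U : Type} [Fintype Ω] [Fintype X₂] [Fintype X₁]
    [Fintype Y₁] [Fintype Y₂] [Fintype U] {Q : Ω → ℝ} (hQ : ∀ z, 0 ≤ Q z) {x₂ : Ω → X₂}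
    {x₁ : Ω → X₁} {y₁ : Ω → Y₁} {y₂ : Ω → Y₂} {u : Ω → U}
    (hX : Ic Q x₂ (fun z => (y₁ z, y₂ z)) x₁ = 0) (hY : Ic Q y₂ (fun z => (x₂ z, x₁ z)) y₁ = 0)
    (hUX : Ic Q x₂ u (fun z => (x₁ z, (y₁ z, y₂ z))) = 0)
    (hUY : Ic Q y₂ u (fun z => (y₁ z, (x₂ z, x₁ z))) = 0)
    (hUXY : Ic Q (fun z => (x₂ z, y₂ z)) u (fun z => (x₁ z, y₁ z)) = 0) :
    I2 Q x₂ u ≤ I2 Q x₁ u ∧ I2 Q y₂ u ≤ I2 Q y₁ u ∧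
      I2 Q (fun z => (x₂ z, y₂ z)) u ≤ I2 Q (fun z => (x₁ z, y₁ z)) u ∧
      Ic Q x₂ y₂ u ≤ Ic Q x₁ y₁ u := by
  obtain ⟨hXU, hXY⟩ := Ic_eq_zero_of_contraction hQ hX hUX
  obtain ⟨hYU, hYX⟩ := Ic_eq_zero_of_contraction hQ hY hUY
  have hx : Ic Q y₂ x₂ u ≤ Ic Q y₂ x₁ u :=
    Ic_le_of_Ic_eq_zero hQ ((Ic_comm Q _ _ _).trans (Ic_eq_zero_of_pair_right hQ hXY))
  have hy : Ic Q x₁ y₂ u ≤ Ic Q x₁ y₁ u :=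
    Ic_le_of_Ic_eq_zero hQ ((Ic_comm Q _ _ _).trans (Ic_eq_zero_of_pair_right hQ hYX))
  refine ⟨I2_le_of_Ic_eq_zero hQ hXU, I2_le_of_Ic_eq_zero hQ hYU, I2_le_of_Ic_eq_zero hQ hUXY, ?_⟩
  calc Ic Q x₂ y₂ u = Ic Q y₂ x₂ u := Ic_comm Q x₂ y₂ u
    _ ≤ Ic Q y₂ x₁ u := hx
    _ = Ic Q x₁ y₂ u := Ic_comm Q y₂ x₁ u
    _ ≤ Ic Q x₁ y₁ u := hy

section Kernel

variable {α U : Type} [Fintype α] [Fintype U]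

def compProd (p : α → ℝ) (κ : α → U → ℝ) : α × U → ℝ := fun z => p z.1 * κ z.1 z.2

lemma Ic_compProd_eq_zero {β δ : Type} [Fintype β] [Fintype δ] {p : α → ℝ} (hp : ∀ a, 0 ≤ p a)
    {κ : δ → U → ℝ} (hκ : ∀ d u, 0 ≤ κ d u) (f : α → β) (h : α → δ) :
    Ic (compProd p fun a => κ (h a)) (fun z => f z.1) Prod.snd (fun z => h z.1) = 0 := by
  refine Ic_eq_zero_of_factor (fun z => mul_nonneg (hp _) (hκ _ _)) fun ⟨⟨b, c⟩, d⟩ => ?_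
  have key : ∀ a u,
      (if h a = d then p a * κ (h a) u else 0) = (if h a = d then p a else 0) * κ d u := by
    intro a u
    split_ifs with had
    · rw [had]
    · rw [zero_mul]
  simp only [dist, Fintype.sum_prod_type, Prod.mk.injEq, ite_and]
  simp only [key]
  simp only [Finset.sum_ite_irrel, Finset.sum_const_zero, Finset.sum_ite_eq', Finset.mem_univ,
    if_true, ← Finset.mul_sum]
  simp only [← ite_zero_mul, ← Finset.sum_mul]
  ring

lemma dist_compProd_fst {p : α → ℝ} {κ : α → U → ℝ} (hκ : ∀ a, p a ≠ 0 → ∑ u, κ a u = 1) :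
    dist (compProd p κ) Prod.fst = p := by
  funext a
  simp only [dist, compProd, Fintype.sum_prod_type, Finset.sum_ite_irrel, Finset.sum_const_zero,
    Finset.sum_ite_eq', Finset.mem_univ, if_true, ← Finset.mul_sum]
  by_cases ha : p a = 0
  · rw [ha, zero_mul]
  · rw [hκ a ha, mul_one]

lemma dist_compProd_comp {β : Type} (p : α → ℝ) (κ : β → U → ℝ) (π : α → β) (b : β) (u : U) :
    dist (compProd p fun a => κ (π a)) (fun z => (π z.1, z.2)) (b, u) = dist p π b * κ b u := by
  have key : ∀ a,
      (if π a = b then p a * κ (π a) u else 0) = (if π a = b then p a else 0) * κ b u := by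
    intro a
    split_ifs with hab
    · rw [hab]
    · rw [zero_mul]
  simp only [dist, compProd, Fintype.sum_prod_type, Prod.mk.injEq, ite_and]
  simp only [Finset.sum_ite_irrel, Finset.sum_const_zero, Finset.sum_ite_eq', Finset.mem_univ,
    if_true, key, ← Finset.sum_mul]

end Kernel

section Coupling

variable {α X Y U : Type} [Fintype α] [Fintype X] [Fintype Y] [Fintype U]

/-- The conditional pmf `q(u | b)`; it is `0` where `r b = 0` (division by zero), a fibre of
probability zero. -/
def condKernel (r : X × Y → ℝ) (q : X × Y × U → ℝ) (b : X × Y) (u : U) : ℝ := q (b.1, b.2, u) / r b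

lemma IsAux.sum_condKernel {r : X × Y → ℝ} {q : X × Y × U → ℝ} (hq : IsAux r q) {b : X × Y}
    (hb : r b ≠ 0) : ∑ u, condKernel r q b u = 1 := by
  simp only [condKernel, ← Finset.sum_div, hq.2, div_self hb]

lemma IsAux.mul_condKernel {r : X × Y → ℝ} {q : X × Y × U → ℝ} (hq : IsAux r q) (b : X × Y)
    (u : U) : r b * condKernel r q b u = q (b.1, b.2, u) := by
  by_cases hb : r b = 0
  · have hsum : ∑ u, q (b.1, b.2, u) = 0 := (hq.2 b.1 b.2).trans hb
    rw [hb, zero_mul, eq_comm]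
    exact (Finset.sum_eq_zero_iff_of_nonneg fun u _ => hq.1.1 _).1 hsum u (Finset.mem_univ u)
  · rw [condKernel, mul_div_cancel₀ _ hb]

theorem exists_coupling {p : α → ℝ} (hp : IsPMF p) (π : α → X × Y) {q : X × Y × U → ℝ}
    (hq : IsAux (dist p π) q) :
    ∃ Q : α × U → ℝ, IsPMF Q ∧ dist Q Prod.fst = p ∧
      dist Q (fun z => ((π z.1).1, (π z.1).2, z.2)) = q ∧
      ∀ {β δ : Type} [Fintype β] [Fintype δ] (f : α → β) (h : α → δ),
        (∃ ρ : δ → X × Y, ∀ a, π a = ρ (h a)) →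
          Ic Q (fun z => f z.1) Prod.snd (fun z => h z.1) = 0 := by
  have hκ : ∀ b u, 0 ≤ condKernel (dist p π) q b u :=
    fun b u => div_nonneg (hq.1.1 _) (dist_nonneg hp.1 π b)
  have hfst : dist (compProd p fun a => condKernel (dist p π) q (π a)) Prod.fst = p :=
    dist_compProd_fst fun a ha =>
      hq.sum_condKernel ((lt_of_le_of_ne (hp.1 a) (Ne.symm ha)).trans_le (le_dist hp.1 π a)).ne'
  refine ⟨compProd p fun a => condKernel (dist p π) q (π a),
    ⟨fun z => mul_nonneg (hp.1 _) (hκ _ _), by rw [← sum_dist _ Prod.fst, hfst, hp.2]⟩, hfst, ?_,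
    fun f h ⟨ρ, hρ⟩ => ?_⟩
  · funext ⟨x, y, u⟩
    calc _ = dist (compProd p fun a => condKernel (dist p π) q (π a)) (fun z => (π z.1, z.2))
          ((x, y), u) :=
          dist_comp_injective (φ := fun v : (X × Y) × U => (v.1.1, v.1.2, v.2))
            (Equiv.prodAssoc X Y U).injective _ _ _
      _ = q (x, y, u) := by rw [dist_compProd_comp, hq.mul_condKernel]
  · simpa only [← hρ] using Ic_compProd_eq_zero (κ := fun d => condKernel (dist p π) q (ρ d))
      hp.1 (fun d u => hκ _ u) f h

end Coupling

section Region

variable {Ω X Y U : Type} [Fintype Ω] [Fintype X] [Fintype Y] [Fintype U]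

lemma I2_dist_eq (Q : Ω → ℝ) (x : Ω → X) (y : Ω → Y) (u : Ω → U) :
    (I2 (dist Q fun z => (x z, y z, u z)) cX cU, I2 (dist Q fun z => (x z, y z, u z)) cY cU,
      I2 (dist Q fun z => (x z, y z, u z)) cXY cU) =
      (I2 Q x u, I2 Q y u, I2 Q (fun z => (x z, y z)) u) := by
  simp only [← I2_comp]
  rfl

lemma mem_MIRegion {Q : Ω → ℝ} (hQ : IsPMF Q) (x : Ω → X) (y : Ω → Y) (u : Ω → U) :
    (I2 Q x u, I2 Q y u, I2 Q (fun z => (x z, y z)) u) ∈ MIRegion (dist Q fun z => (x z, y z)) :=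
  ⟨U, inferInstance, _, ⟨isPMF_dist hQ _, sum_dist_triple Q x y u⟩, (I2_dist_eq Q x y u).symm⟩

end Region

/-- `P` is the joint pmf of `(X₂, X₁, Y₁, Y₂)`; `hMarkov₁` and `hMarkov₂` express the Markov chain
`X₂ − X₁ − Y₁ − Y₂` as `I(X₂; Y₁,Y₂ | X₁) = 0` and `I(X₂,X₁; Y₂ | Y₁) = 0`. -/
theorem stmt7 {X₂ X₁ Y₁ Y₂ : Type} [Fintype X₂] [Fintype X₁] [Fintype Y₁] [Fintype Y₂]
    (P : X₂ × X₁ × Y₁ × Y₂ → ℝ) (hP : IsPMF P)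
    (hMarkov₁ : Ic P (fun a => a.1) (fun a => (a.2.2.1, a.2.2.2)) (fun a => a.2.1) = 0)
    (hMarkov₂ : Ic P (fun a => (a.1, a.2.1)) (fun a => a.2.2.2) (fun a => a.2.2.1) = 0) :
    ∀ v ∈ MIRegion (dist P (fun a => (a.2.1, a.2.2.1))),
      ∃ w ∈ MIRegion (dist P (fun a => (a.1, a.2.2.2))),
        w.1 ≤ v.1 ∧ w.2.1 ≤ v.2.1 ∧ w.2.2 ≤ v.2.2 ∧
        I2 (dist P (fun a => (a.1, a.2.2.2))) Prod.fst Prod.snd - w.1 - w.2.1 + w.2.2 ≤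
          I2 (dist P (fun a => (a.2.1, a.2.2.1))) Prod.fst Prod.snd - v.1 - v.2.1 + v.2.2 := by
  rintro v ⟨U, _, q, hq, rfl⟩
  obtain ⟨Q, hQ, rfl, rfl, hU⟩ := exists_coupling hP (fun a => (a.2.1, a.2.2.1)) hq
  simp only [← dist_comp, ← I2_comp, ← Ic_comp, cX, cY, cU, cXY] at hMarkov₁ hMarkov₂ ⊢
  obtain ⟨h₁, h₂, h₃, h₄⟩ := data_processing_of_markov hQ.1 hMarkov₁
    ((Ic_comm Q _ _ _).trans hMarkov₂)
    (hU (fun a => a.1) (fun a => (a.2.1, a.2.2.1, a.2.2.2)) ⟨fun d => (d.1, d.2.1), fun _ => rfl⟩)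
    (hU (fun a => a.2.2.2) (fun a => (a.2.2.1, a.1, a.2.1)) ⟨fun d => (d.2.2, d.1), fun _ => rfl⟩)
    (hU (fun a => (a.1, a.2.2.2)) (fun a => (a.2.1, a.2.2.1)) ⟨id, fun _ => rfl⟩)
  refine ⟨_, mem_MIRegion hQ (fun z => z.1.1) (fun z => z.1.2.2.2) Prod.snd, h₁, h₂, h₃, ?_⟩
  linarith [Ic_eq_I2 Q (fun z => z.1.1) (fun z => z.1.2.2.2) Prod.snd,
    Ic_eq_I2 Q (fun z => z.1.2.1) (fun z => z.1.2.2.1) Prod.snd]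

end GW
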